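/- Let f₁, f₂ : S¹ → S¹ be continuous maps with degrees d₁ and d₂. If d₁ ≠ d₂, then any maps homotopic to f₁ and f₂ have at least |d₁ - d₂| coincidence points; moreover this bound is attained, i.e. the minimal number of coincidence points over all pairs homotopic to (f₁, f₂) equals |d₁ - d₂|. -/

import Mathlib

/-!
Lift `t ↦ q (exp t)` through the covering map `Circle.exp : ℝ → S¹` to `ψ : ℝ → ℝ`. For `q`
homotopic to `z ↦ z ^ d`, homotopy lifting shows `ψ (2π) - ψ 0 = 2πd`: this difference lies in
`2πℤ` throughout the lifted homotopy, so it is constant. By the intermediate value theorem `ψ`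
then crosses `|d|` distinct multiples of `2π` on `[0, 2π)`, giving `|d|` solutions of `q z = 1`.
Coincidences of `g₁, g₂` are the solutions of `g₁ / g₂ = 1`, and `g₁ / g₂` is homotopic to
`z ↦ z ^ (d₁ - d₂)`, whose `|d₁ - d₂|` roots of unity show that the bound is sharp.
-/

open Real Set unitInterval

theorem ContinuousMap.Homotopic.div {X G : Type*} [TopologicalSpace X] [TopologicalSpace G]
    [Group G] [IsTopologicalGroup G] {f₀ f₁ g₀ g₁ : C(X, G)} (hf : f₀.Homotopic f₁)
    (hg : g₀.Homotopic g₁) : (f₀ / g₀).Homotopic (f₁ / g₁) := by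
  obtain ⟨F⟩ := hf
  obtain ⟨G⟩ := hg
  exact ⟨⟨⟨fun p => F p / G p, by fun_prop⟩, fun x => by simp, fun x => by simp⟩⟩

namespace Circle

noncomputable def zpowMap (d : ℤ) : C(Circle, Circle) := ⟨fun z => z ^ d, continuous_zpow d⟩

theorem zpowMap_div_zpowMap (d₁ d₂ : ℤ) : zpowMap d₁ / zpowMap d₂ = zpowMap (d₁ - d₂) := by
  ext z
  simp [zpowMap, zpow_sub, div_eq_mul_inv]

theorem encard_pow_eq_one (n : ℕ) [NeZero n] : {z : Circle | z ^ n = 1}.encard = n := by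
  have e : {z : Circle | z ^ n = 1} ≃ rootsOfUnity n Circle :=
    _root_.toUnits.toEquiv.subtypeEquiv fun z => by simp [mem_rootsOfUnity, ← Units.val_inj]
  have hcard : Nat.card (rootsOfUnity n Circle) = n :=
    HasEnoughRootsOfUnity.natCard_rootsOfUnity Circle n
  have : Finite (rootsOfUnity n Circle) :=
    Nat.finite_of_card_ne_zero (by rw [hcard]; exact NeZero.ne n)
  rw [← ENat.card_coe_set_eq, ENat.card_congr e, ENat.card_eq_coe_natCard, hcard]

theorem encard_zpow_eq_one {d : ℤ} (hd : d ≠ 0) : {z : Circle | z ^ d = 1}.encard = d.natAbs := by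
  have : NeZero d.natAbs := ⟨Int.natAbs_ne_zero.mpr hd⟩
  simp_rw [← pow_natAbs_eq_one]
  exact encard_pow_eq_one d.natAbs

theorem exists_lift_of_homotopic_zpowMap {d : ℤ} {q : C(Circle, Circle)}
    (h : (zpowMap d).Homotopic q) :
    ∃ ψ : ℝ → ℝ, Continuous ψ ∧ (∀ t, exp (ψ t) = q (exp t)) ∧
      ψ (2 * π) = ψ 0 + d * (2 * π) := by
  obtain ⟨F⟩ := h
  let H : C(I × ℝ, Circle) := F.toContinuousMap.comp ((ContinuousMap.id I).prodMap exp)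
  let f : C(ℝ, ℝ) := ⟨fun t => d * t, by fun_prop⟩
  have H_zero (t : ℝ) : H (0, t) = exp (f t) := by
    simpa [H, f, zpowMap] using F.apply_zero (exp t)
  let Φ := isCoveringMap_exp.liftHomotopy H f H_zero
  have hΦ (s : I) (t : ℝ) : exp (Φ (s, t)) = F (s, exp t) :=
    congr_fun (isCoveringMap_exp.liftHomotopy_lifts H f H_zero) (s, t)
  have hwinding (s : I) : Φ (s, 2 * π) - Φ (s, 0) ∈ AddSubgroup.zmultiples (2 * π) := by
    have : exp (Φ (s, 2 * π)) = exp (Φ (s, 0)) := by rw [hΦ, hΦ, exp_two_pi, exp_zero]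
    obtain ⟨m, hm⟩ := exp_eq_exp.mp this
    exact ⟨m, by simp [hm]⟩
  have hconst : Φ (1, 2 * π) - Φ (1, 0) = Φ (0, 2 * π) - Φ (0, 0) :=
    isPreconnected_univ.constant_of_mapsTo (T := (AddSubgroup.zmultiples (2 * π) : Set ℝ))
      (SetLike.isDiscrete_iff_discreteTopology.mpr inferInstance) (by fun_prop)
      (fun s _ => hwinding s) (mem_univ _) (mem_univ _)
  have hΦ_zero (t : ℝ) : Φ (0, t) = d * t := isCoveringMap_exp.liftHomotopy_zero H f H_zero t
  refine ⟨fun t => Φ (1, t), by fun_prop, fun t => (hΦ 1 t).trans (by simp), ?_⟩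
  rw [hΦ_zero, hΦ_zero] at hconst
  linarith

theorem natCast_le_encard_eq_one_of_lift {q : Circle → Circle} {ψ : ℝ → ℝ} (hψ : Continuous ψ)
    (hlift : ∀ t, exp (ψ t) = q (exp t)) {n : ℕ} (hn : ψ (2 * π) = ψ 0 + n * (2 * π)) :
    (n : ℕ∞) ≤ {z | q z = 1}.encard := by
  have hπ : 0 < 2 * π := by positivity
  set c := ⌈ψ 0 / (2 * π)⌉
  have hc_ge : ψ 0 ≤ c * (2 * π) := (div_le_iff₀ hπ).mp (Int.le_ceil _)
  have hc_lt : c * (2 * π) < ψ 0 + 2 * π := by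
    have := Int.ceil_lt_add_one (ψ 0 / (2 * π))
    rw [← sub_lt_iff_lt_add, lt_div_iff₀ hπ] at this
    linarith
  have hcrossing : ∀ j < n, ∃ t ∈ Ico 0 (2 * π), ψ t = (c + j) * (2 * π) := by
    intro j hj
    have hj' : (j : ℝ) + 1 ≤ n := by exact_mod_cast hj
    exact intermediate_value_Ico hπ.le hψ.continuousOn ⟨by nlinarith, by nlinarith⟩
  choose! t ht hψt using hcrossing
  calc (n : ℕ∞)
      = (Iio n).encard := by
        rw [← Finset.coe_range, encard_coe_eq_coe_finsetCard, Finset.card_range]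
    _ ≤ {z | q z = 1}.encard := by
      refine encard_le_encard_of_injOn (f := fun j => exp (t j)) (fun j hj => ?_) ?_
      · rw [mem_ofPred_eq, ← hlift, hψt j hj]
        exact_mod_cast exp_int_mul_two_pi (c + j)
      · intro i hi j hj hij
        have := congrArg ψ (exp_injOn_Ico (by simp) (ht i hi) (ht j hj) hij)
        rw [hψt i hi, hψt j hj] at this
        have : (i : ℝ) = j := by nlinarith
        exact_mod_cast this

theorem natAbs_le_encard_eq_one_of_homotopic {d : ℤ} {q : C(Circle, Circle)}
    (h : (zpowMap d).Homotopic q) : (d.natAbs : ℕ∞) ≤ {z | q z = 1}.encard := by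
  obtain ⟨ψ, hψ, hlift, hwinding⟩ := exists_lift_of_homotopic_zpowMap h
  obtain ⟨n, rfl | rfl⟩ := Int.eq_nat_or_neg d
  · exact natCast_le_encard_eq_one_of_lift hψ hlift (by exact_mod_cast hwinding)
  · have hlift' (t : ℝ) : exp (-ψ t) = (q (exp t))⁻¹ := by rw [exp_neg, hlift]
    simpa using natCast_le_encard_eq_one_of_lift (q := fun z => (q z)⁻¹) hψ.neg hlift'
      (by simp only [Pi.neg_apply]; push_cast at hwinding; linarith)

end Circle

open Circle in
/-- If `f₁ f₂ : S¹ → S¹` have degrees `d₁ ≠ d₂` (i.e. are homotopic to `z ↦ z^dᵢ`),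
then every pair homotopic to `(f₁, f₂)` has at least `|d₁ - d₂|` coincidence points,
and this bound is attained: the minimal number of coincidence points equals `|d₁ - d₂|`. -/
theorem stmt_1 (d₁ d₂ : ℤ) (hd : d₁ ≠ d₂) (f₁ f₂ : C(Circle, Circle))
    (h₁ : f₁.Homotopic ⟨fun z => z ^ d₁, continuous_zpow d₁⟩)
    (h₂ : f₂.Homotopic ⟨fun z => z ^ d₂, continuous_zpow d₂⟩) :
    (∀ g₁ g₂ : C(Circle, Circle), f₁.Homotopic g₁ → f₂.Homotopic g₂ →
      ((d₁ - d₂).natAbs : ℕ∞) ≤ {z : Circle | g₁ z = g₂ z}.encard) ∧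
    sInf {c : ℕ∞ | ∃ g₁ g₂ : C(Circle, Circle), f₁.Homotopic g₁ ∧ f₂.Homotopic g₂ ∧
        c = {z : Circle | g₁ z = g₂ z}.encard} = ((d₁ - d₂).natAbs : ℕ∞) := by
  have lower (g₁ g₂ : C(Circle, Circle)) (hg₁ : f₁.Homotopic g₁) (hg₂ : f₂.Homotopic g₂) :
      ((d₁ - d₂).natAbs : ℕ∞) ≤ {z : Circle | g₁ z = g₂ z}.encard := by
    have hdiv : (zpowMap (d₁ - d₂)).Homotopic (g₁ / g₂) :=
      zpowMap_div_zpowMap d₁ d₂ ▸ (h₁.symm.trans hg₁).div (h₂.symm.trans hg₂)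
    simpa [div_eq_one] using natAbs_le_encard_eq_one_of_homotopic hdiv
  have attained : {z : Circle | z ^ d₁ = z ^ d₂}.encard = (d₁ - d₂).natAbs := by
    simpa [zpow_sub, mul_inv_eq_one] using encard_zpow_eq_one (sub_ne_zero.mpr hd)
  refine ⟨lower, le_antisymm ?_ (le_sInf ?_)⟩
  · exact sInf_le ⟨_, _, h₁, h₂, attained.symm⟩
  · rintro c ⟨g₁, g₂, hg₁, hg₂, rfl⟩
    exact lower g₁ g₂ hg₁ hg₂
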